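/- In the weighted projective space setting with G = GL_{m+1}, λ = x₀, χ = (a₀,…,a_m) antidominant with all a_i > 0: for the element v_k ∈ W^P, Φ_{v_k}^P = {x₀ − x_k, x₁ − x_k, …, x_{k−1} − x_k} and gcd(a_{v_k}, a_{Φ_{v_k}^P}) = gcd(a₀, …, a_k). Hence q_{v_k} = gcd(a₀,…,a_k)/gcd(a₀,…,a_m). -/

import Mathlib

/-- The standard basis character `x_i` of the diagonal torus of `GL_{m+1}`. -/
def wpsX (m : ℕ) (i : Fin (m + 1)) : Fin (m + 1) → ℤ := Pi.single i 1

/-- The Weyl group `S_{m+1}` acts on characters by `σ·x_i = x_{σ(i)}`. -/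
def wpsAct (m : ℕ) (σ : Equiv.Perm (Fin (m + 1))) (μ : Fin (m + 1) → ℤ) :
    Fin (m + 1) → ℤ := μ ∘ σ.symm

/-- `Φ(𝔲⁻) = {x_i − x_0 : i ≠ 0}` for `λ = x_0`. -/
def wpsPhiU (m : ℕ) : Set (Fin (m + 1) → ℤ) :=
  {μ | ∃ i : Fin (m + 1), (i : ℕ) ≠ 0 ∧ μ = wpsX m i - wpsX m 0}

/-- `Φ⁺ = {x_i − x_j : i < j}`. -/
def wpsPhiPos (m : ℕ) : Set (Fin (m + 1) → ℤ) :=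
  {μ | ∃ i j : Fin (m + 1), (i : ℕ) < (j : ℕ) ∧ μ = wpsX m i - wpsX m j}

/-!
Since `v_k` sends `x_0` to `x_k` and permutes the other basis characters, it maps
`Φ(𝔲⁻) = {x_i - x_0 : i ≠ 0}` onto `{x_j - x_k : j ≠ k}`, whose positive roots are those with
`j < k`. For the gcd, subtracting `a` from the other arguments does not change `gcd(a, …)`, so
`gcd(a_k, a_i - a_k : i < k) = gcd(a_i : i ≤ k)`; dividing by `d = gcd(a₀, …, a_m)` commutes
with the gcd because `d` divides every `a_i`. At `w₀ = v_m` the value is `d / d`.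
-/

lemma wpsX_comp_symm (m : ℕ) (σ : Equiv.Perm (Fin (m + 1))) (i : Fin (m + 1)) :
    wpsX m i ∘ σ.symm = wpsX m (σ i) := by
  funext j
  simp [wpsX, Pi.single_apply, Equiv.symm_apply_eq]

lemma wpsAct_wpsX_sub_wpsX (m : ℕ) (σ : Equiv.Perm (Fin (m + 1))) (i j : Fin (m + 1)) :
    wpsAct m σ (wpsX m i - wpsX m j) = wpsX m (σ i) - wpsX m (σ j) := by
  show wpsX m i ∘ σ.symm - wpsX m j ∘ σ.symm = _
  rw [wpsX_comp_symm, wpsX_comp_symm]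

lemma wpsX_sub_wpsX_inj (m : ℕ) {a b c d : Fin (m + 1)} (hab : a ≠ b) (hcd : c ≠ d) :
    wpsX m a - wpsX m b = wpsX m c - wpsX m d ↔ a = c ∧ b = d := by
  refine ⟨fun h => ?_, fun ⟨rfl, rfl⟩ => rfl⟩
  have ha := congrFun h a
  have hb := congrFun h b
  simp only [wpsX, Pi.sub_apply, Pi.single_apply] at ha hb
  constructor
  · by_contra hac
    simp only [hab, hac, if_true, if_false] at ha
    split_ifs at ha <;> omega
  · by_contra hbd
    simp only [hab.symm, hbd, if_true, if_false] at hb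
    split_ifs at hb <;> omega

lemma wpsAct_image_wpsPhiU (m : ℕ) (σ : Equiv.Perm (Fin (m + 1))) :
    wpsAct m σ '' wpsPhiU m = {μ | ∃ j, j ≠ σ 0 ∧ μ = wpsX m j - wpsX m (σ 0)} := by
  ext μ
  constructor
  · rintro ⟨_, ⟨i, hi, rfl⟩, rfl⟩
    refine ⟨σ i, fun h => hi ?_, wpsAct_wpsX_sub_wpsX m σ i 0⟩
    rw [σ.injective h, Fin.val_zero]
  · rintro ⟨j, hj, rfl⟩
    refine ⟨_, ⟨σ.symm j, fun h => hj ?_, rfl⟩, ?_⟩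
    · rw [← σ.apply_symm_apply j, show σ.symm j = 0 from Fin.ext h]
    · rw [wpsAct_wpsX_sub_wpsX, σ.apply_symm_apply]

lemma wpsPhiPos_inter_wpsX_sub (m : ℕ) (c : Fin (m + 1)) :
    wpsPhiPos m ∩ {μ | ∃ j, j ≠ c ∧ μ = wpsX m j - wpsX m c}
      = {μ | ∃ i : Fin (m + 1), (i : ℕ) < c ∧ μ = wpsX m i - wpsX m c} := by
  ext μ
  constructor
  · rintro ⟨⟨a, b, hab, rfl⟩, j, hj, hμ⟩
    obtain ⟨rfl, rfl⟩ := (wpsX_sub_wpsX_inj m (Fin.ne_of_lt hab) hj).1 hμ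
    exact ⟨a, hab, rfl⟩
  · rintro ⟨i, hi, rfl⟩
    exact ⟨⟨i, c, hi, rfl⟩, i, Fin.ne_of_lt hi, rfl⟩

lemma gcd_finset_gcd_sub_right {α ι : Type*} [CommRing α] [NormalizedGCDMonoid α]
    (s : Finset ι) (f : ι → α) (a : α) :
    gcd a (s.gcd fun i => f i - a) = gcd a (s.gcd f) := by
  have key : ∀ x, x ∣ gcd a (s.gcd fun i => f i - a) ↔ x ∣ gcd a (s.gcd f) := fun x => by
    simp only [dvd_gcd_iff, Finset.dvd_gcd_iff]
    exact and_congr_right fun hx => forall₂_congr fun i _ => dvd_sub_left hx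
  exact dvd_antisymm_of_normalize_eq (normalize_gcd _ _) (normalize_gcd _ _)
    ((key _).1 dvd_rfl) ((key _).2 dvd_rfl)

lemma Int.finset_gcd_ediv {ι : Type*} (s : Finset ι) (f : ι → ℤ) {d : ℤ} (hd : 0 ≤ d)
    (hdvd : ∀ i ∈ s, d ∣ f i) : (s.gcd fun i => f i / d) = s.gcd f / d := by
  rcases hd.eq_or_lt with rfl | hd
  · simp only [Int.ediv_zero]
    exact Finset.gcd_eq_zero_iff.2 fun _ _ => rfl
  conv_rhs => rw [Finset.gcd_congr rfl fun i hi => (Int.mul_ediv_cancel' (hdvd i hi)).symm]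
  rw [Finset.gcd_mul_left, Int.normalize_of_nonneg hd.le, Int.mul_ediv_cancel_left _ hd.ne']

lemma Int.ediv_ediv_ediv_self (x d : ℤ) : x / d / (d / d) = x / d := by
  rcases eq_or_ne d 0 with rfl | hd
  · simp
  · rw [Int.ediv_self hd, Int.ediv_one]

lemma Fin.filter_val_le_eq_insert {m k : ℕ} (hk : k < m + 1) :
    Finset.univ.filter (fun i : Fin (m + 1) => (i : ℕ) ≤ k)
      = insert ⟨k, hk⟩ (Finset.univ.filter fun i : Fin (m + 1) => (i : ℕ) < k) := by
  ext i
  simp [Fin.ext_iff, le_iff_eq_or_lt]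

lemma gcd_ediv_sub_weights_eq (m k : ℕ) (hk : k < m + 1) (A : Fin (m + 1) → ℤ) :
    gcd (A ⟨k, hk⟩ / Finset.univ.gcd A)
        ((Finset.univ.filter (fun i : Fin (m + 1) => (i : ℕ) < k)).gcd
          (fun i => (A i - A ⟨k, hk⟩) / Finset.univ.gcd A))
      = (Finset.univ.filter (fun i : Fin (m + 1) => (i : ℕ) ≤ k)).gcd A
          / Finset.univ.gcd A := by
  have hd : 0 ≤ Finset.univ.gcd A := by
    rw [← Finset.normalize_gcd, ← Int.abs_eq_normalize]; positivity
  have hdvd : ∀ i, Finset.univ.gcd A ∣ A i := fun i => Finset.gcd_dvd (Finset.mem_univ i)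
  simp only [Int.sub_ediv_of_dvd _ (hdvd _)]
  rw [gcd_finset_gcd_sub_right, Fin.filter_val_le_eq_insert,
    ← Int.finset_gcd_ediv _ _ hd fun i _ => hdvd i, Finset.gcd_insert]

theorem stmt13_general (m k : ℕ) (hk : k ≤ m) (A : Fin (m + 1) → ℤ)
    (vk : Equiv.Perm (Fin (m + 1)))
    (hvk : ∀ j : Fin (m + 1), (vk j : ℕ) =
      if (j : ℕ) = 0 then k
      else if (j : ℕ) ≤ m - k then m + 1 - (j : ℕ) else m - (j : ℕ)) :
    -- (i)
    (wpsPhiPos m ∩ (wpsAct m vk '' wpsPhiU m)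
      = {μ | ∃ i : Fin (m + 1), (i : ℕ) < k
          ∧ μ = wpsX m i - wpsX m ⟨k, Nat.lt_succ_of_le hk⟩})
    ∧
    -- (ii)
    (gcd (A ⟨k, Nat.lt_succ_of_le hk⟩ / Finset.univ.gcd A)
        ((Finset.univ.filter (fun i : Fin (m + 1) => (i : ℕ) < k)).gcd
          (fun i => (A i - A ⟨k, Nat.lt_succ_of_le hk⟩) / Finset.univ.gcd A))
      = (Finset.univ.filter (fun i : Fin (m + 1) => (i : ℕ) ≤ k)).gcd A
          / Finset.univ.gcd A)
    ∧
    -- (iii)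
    ((gcd (A ⟨k, Nat.lt_succ_of_le hk⟩ / Finset.univ.gcd A)
        ((Finset.univ.filter (fun i : Fin (m + 1) => (i : ℕ) < k)).gcd
          (fun i => (A i - A ⟨k, Nat.lt_succ_of_le hk⟩) / Finset.univ.gcd A)))
      / (gcd (A (Fin.last m) / Finset.univ.gcd A)
        ((Finset.univ.filter (fun i : Fin (m + 1) => (i : ℕ) < m)).gcd
          (fun i => (A i - A (Fin.last m)) / Finset.univ.gcd A)))
      = (Finset.univ.filter (fun i : Fin (m + 1) => (i : ℕ) ≤ k)).gcd A
          / Finset.univ.gcd A) := by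
  have hvk0 : vk 0 = ⟨k, Nat.lt_succ_of_le hk⟩ := Fin.ext (by simpa using hvk 0)
  have hw₀ : (Finset.univ.filter fun i : Fin (m + 1) => (i : ℕ) ≤ m) = Finset.univ :=
    Finset.filter_true_of_mem fun i _ => Nat.lt_succ_iff.mp i.isLt
  refine ⟨?_, gcd_ediv_sub_weights_eq m k _ A, ?_⟩
  · rw [wpsAct_image_wpsPhiU, hvk0, wpsPhiPos_inter_wpsX_sub]
  · rw [gcd_ediv_sub_weights_eq m k _ A, show Fin.last m = ⟨m, m.lt_succ_self⟩ from rfl, gcd_ediv_sub_weights_eq, hw₀,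
      Int.ediv_ediv_ediv_self]

/-- Weighted projective space setting, `G = GL_{m+1}`, `λ = x₀`,
`χ = (a₀,…,a_m)` antidominant with all `a_i > 0`.  For `v_k ∈ W^P` (one-line notation
`v_k = (k, m, m−1, …, k+1, k−1, …, 0)`):
(i) `Φ_{v_k}^P = Φ⁺ ∩ v_kΦ(𝔲⁻) = {x_i − x_k : 0 ≤ i ≤ k−1}`;
(ii) `gcd(a_{v_k}, a_{Φ_{v_k}^P}) = gcd(a₀, …, a_k)` (in the normalization
`a_μ = ⟨μ,χ⟩/gcd(χ)`, so both sides are divided by `d = gcd(a₀,…,a_m)`);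
(iii) hence `q_{v_k} = gcd(a_{v_k}, a_{Φ_{v_k}^P})/gcd(a_{w₀}, a_{Φ_{w₀}^P})
 = gcd(a₀,…,a_k)/gcd(a₀,…,a_m)`, where `w₀ = v_m`. -/
theorem stmt13 (m k : ℕ) (hk : k ≤ m) (A : Fin (m + 1) → ℤ)
    (hApos : ∀ i, 0 < A i)
    (hanti : ∀ i j : Fin (m + 1), i ≤ j → A i ≤ A j)
    (vk : Equiv.Perm (Fin (m + 1)))
    (hvk : ∀ j : Fin (m + 1), (vk j : ℕ) =
      if (j : ℕ) = 0 then k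
      else if (j : ℕ) ≤ m - k then m + 1 - (j : ℕ) else m - (j : ℕ)) :
    -- (i)
    (wpsPhiPos m ∩ (wpsAct m vk '' wpsPhiU m)
      = {μ | ∃ i : Fin (m + 1), (i : ℕ) < k
          ∧ μ = wpsX m i - wpsX m ⟨k, Nat.lt_succ_of_le hk⟩})
    ∧
    -- (ii)
    (gcd (A ⟨k, Nat.lt_succ_of_le hk⟩ / Finset.univ.gcd A)
        ((Finset.univ.filter (fun i : Fin (m + 1) => (i : ℕ) < k)).gcd
          (fun i => (A i - A ⟨k, Nat.lt_succ_of_le hk⟩) / Finset.univ.gcd A))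
      = (Finset.univ.filter (fun i : Fin (m + 1) => (i : ℕ) ≤ k)).gcd A
          / Finset.univ.gcd A)
    ∧
    -- (iii)
    ((gcd (A ⟨k, Nat.lt_succ_of_le hk⟩ / Finset.univ.gcd A)
        ((Finset.univ.filter (fun i : Fin (m + 1) => (i : ℕ) < k)).gcd
          (fun i => (A i - A ⟨k, Nat.lt_succ_of_le hk⟩) / Finset.univ.gcd A)))
      / (gcd (A (Fin.last m) / Finset.univ.gcd A)
        ((Finset.univ.filter (fun i : Fin (m + 1) => (i : ℕ) < m)).gcd
          (fun i => (A i - A (Fin.last m)) / Finset.univ.gcd A)))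
      = (Finset.univ.filter (fun i : Fin (m + 1) => (i : ℕ) ≤ k)).gcd A
          / Finset.univ.gcd A) :=
  stmt13_general m k hk A vk hvk
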